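/- Every Boolean function computable by a fan-in-2 circuit of depth O(log n) can be computed by a width-5 permutation branching program of length polynomial in n. -/
import Mathlib

set_option maxRecDepth 40000


/-- An instruction over `S₅`: an index into the input bits together with two
permutations; on input `x` it evaluates to the first permutation if the selected
bit is `1` and to the second otherwise. -/
abbrev Instr (n : ℕ) := Fin n × Equiv.Perm (Fin 5) × Equiv.Perm (Fin 5)

/-- The value of an instruction on input `x`. -/
def evalInstr {n : ℕ} (x : Fin n → Bool) (I : Instr n) : Equiv.Perm (Fin 5) :=
  if x I.1 then I.2.1 else I.2.2

/-- A width-5 permutation branching program: a finite sequence of instructions over `S₅`. -/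
abbrev BP (n : ℕ) := List (Instr n)

/-- The value of a width-5 permutation branching program on input `x`:
the product of the values of its instructions. -/
def evalBP {n : ℕ} (x : Fin n → Bool) (P : BP n) : Equiv.Perm (Fin 5) :=
  (P.map (evalInstr x)).prod

/-- `P` computes `C` with output `μ`: it evaluates to `μ` whenever `C x` is true
and to the identity whenever `C x` is false. -/
def ComputesWith {n : ℕ} (P : BP n) (C : (Fin n → Bool) → Bool)
    (μ : Equiv.Perm (Fin 5)) : Prop :=
  ∀ x, evalBP x P = if C x then μ else 1

/-- `μ` is a 5-cycle in `S₅`: a single cycle moving all five elements. -/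
def IsFiveCycle (μ : Equiv.Perm (Fin 5)) : Prop :=
  μ.IsCycle ∧ μ.support.card = 5

/-- Boolean circuits of fan-in 2 with AND and OR gates; leaves are input bits,
possibly negated (`lit i b` evaluates to `xᵢ xor b`). -/
inductive BoolCircuit (n : ℕ) where
  | lit : Fin n → Bool → BoolCircuit n
  | and : BoolCircuit n → BoolCircuit n → BoolCircuit n
  | or  : BoolCircuit n → BoolCircuit n → BoolCircuit n

def BoolCircuit.eval {n : ℕ} : BoolCircuit n → (Fin n → Bool) → Bool
  | lit i b, x => xor (x i) b
  | and C₁ C₂, x => C₁.eval x && C₂.eval x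
  | or C₁ C₂, x => C₁.eval x || C₂.eval x

def BoolCircuit.depth {n : ℕ} : BoolCircuit n → ℕ
  | lit _ _ => 0
  | and C₁ C₂ => max C₁.depth C₂.depth + 1
  | or C₁ C₂ => max C₁.depth C₂.depth + 1

/- ### auxiliary material -/

namespace BarringtonAux

lemma fiveCycle_of_cycleType {σ : Equiv.Perm (Fin 5)} (h : σ.cycleType = {5}) :
    IsFiveCycle σ := by
  constructor
  · rw [← Equiv.Perm.card_cycleType_eq_one, h]; rfl
  · rw [← Equiv.Perm.sum_cycleType, h]; rfl

lemma cycleType_of_fiveCycle {σ : Equiv.Perm (Fin 5)} (h : IsFiveCycle σ) :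
    σ.cycleType = {5} := by
  have := h.1.cycleType
  rw [h.2] at this
  simpa using this

def pα : Equiv.Perm (Fin 5) := c[0,1,2,3,4]
def pβ : Equiv.Perm (Fin 5) := c[0,2,1,4,3]

lemma pα_cycleType : pα.cycleType = {5} := by decide
lemma pβ_cycleType : pβ.cycleType = {5} := by decide
lemma comm_cycleType : (pα * pβ * pα⁻¹ * pβ⁻¹).cycleType = {5} := by decide

lemma exists_commutator {μ : Equiv.Perm (Fin 5)} (hμ : IsFiveCycle μ) :
    ∃ a b : Equiv.Perm (Fin 5), IsFiveCycle a ∧ IsFiveCycle b ∧ a * b * a⁻¹ * b⁻¹ = μ := by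
  have hconj : IsConj (pα * pβ * pα⁻¹ * pβ⁻¹) μ := by
    rw [Equiv.Perm.isConj_iff_cycleType_eq, comm_cycleType, cycleType_of_fiveCycle hμ]
  obtain ⟨σ, hσ⟩ := isConj_iff.mp hconj
  refine ⟨σ * pα * σ⁻¹, σ * pβ * σ⁻¹, ?_, ?_, ?_⟩
  · apply fiveCycle_of_cycleType
    rw [Equiv.Perm.cycleType_conj, pα_cycleType]
  · apply fiveCycle_of_cycleType
    rw [Equiv.Perm.cycleType_conj, pβ_cycleType]
  · rw [← hσ]; group

lemma fiveCycle_inv {μ : Equiv.Perm (Fin 5)} (h : IsFiveCycle μ) : IsFiveCycle μ⁻¹ := by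
  refine ⟨h.1.inv, ?_⟩
  rw [Equiv.Perm.support_inv]; exact h.2

def invBP {n : ℕ} (P : BP n) : BP n :=
  (P.map fun I => (I.1, I.2.1⁻¹, I.2.2⁻¹)).reverse

lemma evalBP_append {n : ℕ} (x : Fin n → Bool) (P Q : BP n) :
    evalBP x (P ++ Q) = evalBP x P * evalBP x Q := by
  simp [evalBP]

lemma evalBP_invBP {n : ℕ} (x : Fin n → Bool) (P : BP n) :
    evalBP x (invBP P) = (evalBP x P)⁻¹ := by
  induction P with
  | nil => simp [evalBP, invBP]
  | cons I P ih =>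
    have : invBP (I :: P) = invBP P ++ [(I.1, I.2.1⁻¹, I.2.2⁻¹)] := by
      simp [invBP]
    rw [this, evalBP_append, ih]
    have hI : evalInstr x (I.1, I.2.1⁻¹, I.2.2⁻¹) = (evalInstr x I)⁻¹ := by
      simp only [evalInstr]; by_cases h : x I.1 <;> simp [h]
    simp [evalBP, hI, mul_inv_rev]

lemma length_invBP {n : ℕ} (P : BP n) : (invBP P).length = P.length := by
  simp [invBP]

lemma computes_congr {n : ℕ} {P : BP n} {C C' : (Fin n → Bool) → Bool}
    {μ : Equiv.Perm (Fin 5)} (h : ComputesWith P C μ) (he : ∀ x, C' x = C x) :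
    ComputesWith P C' μ := fun x => by rw [he x]; exact h x

lemma computes_not {n : ℕ} (i₀ : Fin n) {P : BP n} {C : (Fin n → Bool) → Bool}
    {μ : Equiv.Perm (Fin 5)} (h : ComputesWith P C μ) :
    ComputesWith (P ++ [(i₀, μ⁻¹, μ⁻¹)]) (fun x => !(C x)) μ⁻¹ := by
  intro x
  rw [evalBP_append, h x]
  have : evalBP x [(i₀, μ⁻¹, μ⁻¹)] = μ⁻¹ := by
    simp [evalBP, evalInstr]
  rw [this]
  cases hC : C x <;> simp [hC]

lemma computes_and {n : ℕ} {P₁ P₂ : BP n} {C₁ C₂ : (Fin n → Bool) → Bool}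
    {a b : Equiv.Perm (Fin 5)} (h₁ : ComputesWith P₁ C₁ a) (h₂ : ComputesWith P₂ C₂ b) :
    ComputesWith (P₁ ++ P₂ ++ invBP P₁ ++ invBP P₂) (fun x => C₁ x && C₂ x)
      (a * b * a⁻¹ * b⁻¹) := by
  intro x
  rw [evalBP_append, evalBP_append, evalBP_append, evalBP_invBP, evalBP_invBP, h₁ x, h₂ x]
  cases hC₁ : C₁ x <;> cases hC₂ : C₂ x <;> simp [hC₁, hC₂]

/-- Barrington's theorem, circuit induction. -/
lemma barrington {n : ℕ} (i₀ : Fin n) (C : BoolCircuit n) :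
    ∀ μ : Equiv.Perm (Fin 5), IsFiveCycle μ →
      ∃ P : BP n, ComputesWith P C.eval μ ∧ P.length ≤ 9 ^ C.depth := by
  induction C with
  | lit i b =>
    intro μ hμ
    cases b
    · refine ⟨[(i, μ, 1)], fun x => ?_, by simp [BoolCircuit.depth]⟩
      by_cases hx : x i = true <;> simp [BoolCircuit.eval, evalBP, evalInstr, hx]
    · refine ⟨[(i, 1, μ)], fun x => ?_, by simp [BoolCircuit.depth]⟩
      by_cases hx : x i = true <;> simp [BoolCircuit.eval, evalBP, evalInstr, hx]
  | and C₁ C₂ ih₁ ih₂ =>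
    intro μ hμ
    obtain ⟨a, b, ha, hb, hab⟩ := exists_commutator hμ
    obtain ⟨P₁, h₁, l₁⟩ := ih₁ a ha
    obtain ⟨P₂, h₂, l₂⟩ := ih₂ b hb
    refine ⟨P₁ ++ P₂ ++ invBP P₁ ++ invBP P₂, ?_, ?_⟩
    · have := computes_and h₁ h₂
      rw [hab] at this
      exact computes_congr this (fun x => rfl)
    · simp only [List.length_append, length_invBP, BoolCircuit.depth]
      have e₁ : P₁.length ≤ 9 ^ max C₁.depth C₂.depth :=
        l₁.trans (Nat.pow_le_pow_right (by norm_num) (le_max_left _ _))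
      have e₂ : P₂.length ≤ 9 ^ max C₁.depth C₂.depth :=
        l₂.trans (Nat.pow_le_pow_right (by norm_num) (le_max_right _ _))
      have : (9:ℕ) ^ (max C₁.depth C₂.depth + 1) = 9 * 9 ^ max C₁.depth C₂.depth := by
        ring
      omega
  | or C₁ C₂ ih₁ ih₂ =>
    intro μ hμ
    obtain ⟨a, b, ha, hb, hab⟩ := exists_commutator (fiveCycle_inv hμ)
    obtain ⟨P₁, h₁, l₁⟩ := ih₁ a⁻¹ (fiveCycle_inv ha)
    obtain ⟨P₂, h₂, l₂⟩ := ih₂ b⁻¹ (fiveCycle_inv hb)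
    have hn₁ := computes_not i₀ h₁
    have hn₂ := computes_not i₀ h₂
    rw [inv_inv] at hn₁ hn₂
    have hand := computes_and hn₁ hn₂
    rw [hab] at hand
    have hnot := computes_not i₀ hand
    rw [inv_inv] at hnot
    refine ⟨_, computes_congr hnot (fun x => ?_), ?_⟩
    · simp [BoolCircuit.eval]
    · simp only [List.length_append, length_invBP, List.length_cons, List.length_nil,
        BoolCircuit.depth]
      have e₁ : P₁.length ≤ 9 ^ max C₁.depth C₂.depth :=
        l₁.trans (Nat.pow_le_pow_right (by norm_num) (le_max_left _ _))
      have e₂ : P₂.length ≤ 9 ^ max C₁.depth C₂.depth :=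
        l₂.trans (Nat.pow_le_pow_right (by norm_num) (le_max_right _ _))
      have h9 : (9:ℕ) ^ (max C₁.depth C₂.depth + 1) = 9 * 9 ^ max C₁.depth C₂.depth := by
        ring
      have hpos : 1 ≤ (9:ℕ) ^ max C₁.depth C₂.depth := Nat.one_le_pow _ _ (by norm_num)
      omega

end BarringtonAux

open BarringtonAux

/-- Every family of Boolean functions computable by fan-in-2 circuits of depth
`O(log n)` is computable by width-5 permutation branching programs of length
polynomial in `n`. -/
theorem nc1_to_poly_bp (f : ∀ n, (Fin n → Bool) → Bool) (c : ℕ)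
    (h : ∀ n, 1 ≤ n → ∃ C : BoolCircuit n,
      (∀ x, C.eval x = f n x) ∧ C.depth ≤ c * Nat.log 2 n) :
    ∃ a k : ℕ, ∀ n, 1 ≤ n → ∃ (P : BP n) (μ : Equiv.Perm (Fin 5)),
      IsFiveCycle μ ∧ ComputesWith P (f n) μ ∧ P.length ≤ a * n ^ k := by
  refine ⟨1, 4 * c, fun n hn => ?_⟩
  obtain ⟨C, hC, hd⟩ := h n hn
  have hμ : IsFiveCycle pα := fiveCycle_of_cycleType pα_cycleType
  obtain ⟨P, hP, hl⟩ := barrington ⟨0, hn⟩ C pα hμ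
  refine ⟨P, pα, hμ, computes_congr hP (fun x => (hC x).symm), ?_⟩
  calc P.length ≤ 9 ^ C.depth := hl
    _ ≤ 9 ^ (c * Nat.log 2 n) := Nat.pow_le_pow_right (by norm_num) hd
    _ ≤ (2 ^ 4) ^ (c * Nat.log 2 n) := Nat.pow_le_pow_left (by norm_num) _
    _ = (2 ^ Nat.log 2 n) ^ (4 * c) := by rw [← pow_mul, ← pow_mul]; ring_nf
    _ ≤ n ^ (4 * c) := Nat.pow_le_pow_left (Nat.pow_log_le_self 2 (by omega)) _
    _ = 1 * n ^ (4 * c) := (one_mul _).symm
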